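/- arXiv:1508.06754 — 9 statements merged into one kernel-verified Lean document; each statement's English description precedes it below -/
import Mathlib

section
/- For every N ≥ 1, the word 0·f_1·f_2⋯f_N (the letter 0 followed by the concatenation of the first N finite Fibonacci words) is a prefix of the Fibonacci infinite word f. In other words, f = 0·∏_{n≥1} f_n. -/
/-- The finite Fibonacci words over the alphabet {0,1}: f 1 = 1, f 2 = 0,
and f n = f (n-1) ++ f (n-2) for n ≥ 3. -/
def fibWord : ℕ → List ℕ
  | 0 => []
  | 1 => [1]
  | 2 => [0]
  | n + 3 => fibWord (n + 2) ++ fibWord (n + 1)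

/-- A finite word is a prefix of the Fibonacci infinite word iff it is a
prefix of some finite Fibonacci word f m with m ≥ 2. -/
def IsFibPrefix (x : List ℕ) : Prop := ∃ m, 2 ≤ m ∧ x <+: fibWord m

theorem zero_append_flatten_fibWord_eq (N : ℕ) :
    [0] ++ ((List.range N).map (fun i => fibWord (i + 1))).flatten = fibWord (N + 2) := by
  induction N with
  | zero => rfl
  | succ n ih =>
    rw [List.range_succ, List.map_append, List.flatten_append, ← List.append_assoc, ih]
    simp only [List.map_cons, List.map_nil, List.flatten_cons, List.flatten_nil, List.append_nil]
    rfl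

theorem stmt0_general (N : ℕ) :
    IsFibPrefix ([0] ++ ((List.range N).map (fun i => fibWord (i + 1))).flatten) :=
  ⟨N + 2, by omega, zero_append_flatten_fibWord_eq N ▸ List.prefix_refl _⟩

theorem stmt0 (N : ℕ) (hN : 1 ≤ N) :
    IsFibPrefix ([0] ++ ((List.range N).map (fun i => fibWord (i + 1))).flatten) :=
  stmt0_general N
end

section
/- For every N ≥ 2, the word 01001·∏_{n=2}^{N}(f_n·f_{n-1}·f_n) is a prefix of the Fibonacci infinite word f. In other words, f = 01001·∏_{n≥2} f_n f_{n-1} f_n. -/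
/-! Since `f (n+4) = f (n+3) f (n+2) = f (n+2) f (n+1) f (n+2)`, we get
`f (n+5) = f (n+4) · f (n+2) f (n+1) f (n+2)`; starting from `f 5 = 01001`, the product
up to index `N` is exactly the Fibonacci word `f (N+4)`. -/

theorem fibWord_add_three (n : ℕ) : fibWord (n + 3) = fibWord (n + 2) ++ fibWord (n + 1) := rfl

theorem fibWord_add_four (n : ℕ) :
    fibWord (n + 4) = fibWord (n + 2) ++ fibWord (n + 1) ++ fibWord (n + 2) := by
  rw [fibWord_add_three (n + 1), fibWord_add_three n]

theorem fibWord_add_five_eq_flatten (n : ℕ) :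
    fibWord (n + 5) = [0, 1, 0, 0, 1] ++
      ((List.range n).map
        (fun i => fibWord (i + 2) ++ fibWord (i + 1) ++ fibWord (i + 2))).flatten := by
  induction n with
  | zero => rfl
  | succ n ih =>
    rw [List.range_succ, List.map_append, List.flatten_append, ← List.append_assoc, ← ih]
    simp only [List.map_cons, List.map_nil, List.flatten_cons, List.flatten_nil, List.append_nil]
    rw [← fibWord_add_four]
    exact fibWord_add_three (n + 3)

theorem stmt1_general (N : ℕ) :
    IsFibPrefix ([0, 1, 0, 0, 1] ++
      ((List.range (N - 1)).map
        (fun i => fibWord (i + 2) ++ fibWord (i + 1) ++ fibWord (i + 2))).flatten) := by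
  rw [← fibWord_add_five_eq_flatten]
  exact ⟨N - 1 + 5, by omega, List.prefix_refl _⟩

theorem stmt1 (N : ℕ) (hN : 2 ≤ N) :
    IsFibPrefix ([0, 1, 0, 0, 1] ++
      ((List.range (N - 1)).map
        (fun i => fibWord (i + 2) ++ fibWord (i + 1) ++ fibWord (i + 2))).flatten) :=
  stmt1_general N
end

section
/- For every N ≥ 2, the word 0100·∏_{n=2}^{N}(f_{n-1}·f_n·f_{n-1}) is a prefix of the Fibonacci infinite word f. In other words, f = 0100·∏_{n≥2} f_{n-1} f_n f_{n-1}. -/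
theorem zeroOneZeroZero_append_flatten_eq (k : ℕ) :
    [0, 1, 0, 0] ++
      ((List.range k).map
        (fun i => fibWord (i + 1) ++ fibWord (i + 2) ++ fibWord (i + 1))).flatten =
      fibWord (k + 4) ++ fibWord (k + 2) := by
  induction k with
  | zero => rfl
  | succ k ih =>
    rw [List.range_succ, List.map_append, List.flatten_append, ← List.append_assoc, ih]
    show _ = (fibWord (k + 4) ++ (fibWord (k + 2) ++ fibWord (k + 1))) ++
      (fibWord (k + 2) ++ fibWord (k + 1))
    simp only [List.map_singleton, List.flatten_singleton, List.append_assoc]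

theorem fibWord_add_four_append_prefix (k : ℕ) :
    fibWord (k + 4) ++ fibWord (k + 2) <+: fibWord (k + 5) :=
  ⟨fibWord (k + 1), by rw [fibWord_add_three (k + 2), fibWord_add_three k, List.append_assoc]⟩

theorem stmt2_general (N : ℕ) :
    IsFibPrefix ([0, 1, 0, 0] ++
      ((List.range (N - 1)).map
        (fun i => fibWord (i + 1) ++ fibWord (i + 2) ++ fibWord (i + 1))).flatten) := by
  rw [zeroOneZeroZero_append_flatten_eq]
  exact ⟨N - 1 + 5, by omega, fibWord_add_four_append_prefix (N - 1)⟩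

theorem stmt2 (N : ℕ) (hN : 2 ≤ N) :
    IsFibPrefix ([0, 1, 0, 0] ++
      ((List.range (N - 1)).map
        (fun i => fibWord (i + 1) ++ fibWord (i + 2) ++ fibWord (i + 1))).flatten) :=
  stmt2_general N
end

section
/- For every n ≥ 2 one has p_{2n+1} = p_{2n-1}·01·p_{2n} = p_{2n}·10·p_{2n-1} and p_{2n+2} = p_{2n}·10·p_{2n+1} = p_{2n+1}·01·p_{2n}. -/
/-- The central word p n: the Fibonacci word f n with its last two letters removed. -/
def centralWord (n : ℕ) : List ℕ := (fibWord n).dropLast.dropLast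

/-!
Since `f (m+2) = f (m+1) ++ f m` and, for `m ≥ 3`, `f m = p m ++ fibSuffix m` with the suffix equal
to `01` or `10` according to the parity of `m`, one gets `p (m+2) = f (m+1) ++ p m`. An induction then shows
that the two factors may be swapped, `p (m+2) = f m ++ p (m+1)`. Splitting off the last two letters
of the `f`-factor in each of these gives the two factorisations of `p (m+2)`.
-/

open List

def fibSuffix (m : ℕ) : List ℕ := if Even m then [1, 0] else [0, 1]

lemma fibSuffix_add_two (m : ℕ) : fibSuffix (m + 2) = fibSuffix m := by
  simp [fibSuffix, Nat.even_add_one]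

lemma fibWord_add_two {m : ℕ} (hm : 1 ≤ m) : fibWord (m + 2) = fibWord (m + 1) ++ fibWord m := by
  obtain ⟨k, rfl⟩ := Nat.exists_eq_add_of_le' hm
  rfl

lemma centralWord_eq_of_fibWord_eq {m k : ℕ} {w : List ℕ} (h : fibWord m = w ++ fibSuffix k) :
    centralWord m = w := by
  rw [centralWord, h, fibSuffix]
  split_ifs <;> simp

lemma centralWord_add_two_of_fibWord_eq {m : ℕ} (hm : 1 ≤ m)
    (h : fibWord m = centralWord m ++ fibSuffix m) :
    centralWord (m + 2) = fibWord (m + 1) ++ centralWord m :=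
  centralWord_eq_of_fibWord_eq (k := m) (by rw [fibWord_add_two hm, h, append_assoc])

lemma fibWord_eq_centralWord_append_fibSuffix {m : ℕ} (hm : 3 ≤ m) :
    fibWord m = centralWord m ++ fibSuffix m := by
  obtain ⟨k, rfl⟩ := Nat.exists_eq_add_of_le' hm
  clear hm
  induction k using Nat.twoStepInduction with
  | zero => rfl
  | one => rfl
  | more k ih _ =>
    rw [fibWord_add_two (by omega), ih, centralWord_add_two_of_fibWord_eq (by omega) ih,
      append_assoc]
    simp only [fibSuffix_add_two]

lemma centralWord_add_two {m : ℕ} (hm : 3 ≤ m) :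
    centralWord (m + 2) = fibWord (m + 1) ++ centralWord m :=
  centralWord_add_two_of_fibWord_eq (by omega) (fibWord_eq_centralWord_append_fibSuffix hm)

lemma centralWord_add_two' {m : ℕ} (hm : 3 ≤ m) :
    centralWord (m + 2) = fibWord m ++ centralWord (m + 1) := by
  induction m, hm using Nat.le_induction with
  | base => rfl
  | succ m hm ih =>
    rw [centralWord_add_two (by omega), fibWord_add_two (by omega), append_assoc, ← ih]

lemma centralWord_add_two_eq_append_fibSuffix {m : ℕ} (hm : 3 ≤ m) :
    centralWord (m + 2) = centralWord (m + 1) ++ fibSuffix (m + 1) ++ centralWord m := by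
  rw [centralWord_add_two hm, fibWord_eq_centralWord_append_fibSuffix (by omega)]

lemma centralWord_add_two_eq_append_fibSuffix' {m : ℕ} (hm : 3 ≤ m) :
    centralWord (m + 2) = centralWord m ++ fibSuffix m ++ centralWord (m + 1) := by
  rw [centralWord_add_two' hm, fibWord_eq_centralWord_append_fibSuffix hm]

theorem stmt3 (n : ℕ) (hn : 2 ≤ n) :
    (centralWord (2 * n + 1) = centralWord (2 * n - 1) ++ [0, 1] ++ centralWord (2 * n) ∧
     centralWord (2 * n + 1) = centralWord (2 * n) ++ [1, 0] ++ centralWord (2 * n - 1)) ∧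
    (centralWord (2 * n + 2) = centralWord (2 * n) ++ [1, 0] ++ centralWord (2 * n + 1) ∧
     centralWord (2 * n + 2) = centralWord (2 * n + 1) ++ [0, 1] ++ centralWord (2 * n)) := by
  have hm : 3 ≤ 2 * n - 1 := by omega
  have hsucc : 2 * n - 1 + 1 = 2 * n := by omega
  have hsucc_succ : 2 * n - 1 + 2 = 2 * n + 1 := by omega
  have hodd : fibSuffix (2 * n - 1) = [0, 1] := by
    simp [fibSuffix, Nat.even_sub (by omega : 1 ≤ 2 * n)]
  have heven : fibSuffix (2 * n) = [1, 0] := by simp [fibSuffix]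
  have hodd' : fibSuffix (2 * n + 1) = [0, 1] := by simp [fibSuffix]
  refine ⟨⟨?_, ?_⟩, ?_, ?_⟩
  · simpa [hsucc, hsucc_succ, hodd] using centralWord_add_two_eq_append_fibSuffix' hm
  · simpa [hsucc, hsucc_succ, heven] using centralWord_add_two_eq_append_fibSuffix hm
  · simpa [heven] using centralWord_add_two_eq_append_fibSuffix' (m := 2 * n) (by omega)
  · simpa [hodd'] using centralWord_add_two_eq_append_fibSuffix (m := 2 * n) (by omega)
end

section
/- For every N ≥ 1, the word 0·∏_{n=1}^{N} f'_{2n+1} (the letter 0 followed by the concatenation of the first N odd-indexed co-Fibonacci words) is a prefix of the Fibonacci infinite word f. In other words, f = 0·∏_{n≥1} f'_{2n+1}. -/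
/-- The co-Fibonacci word f' n = f (n-2) ++ f (n-1), for n ≥ 3. -/
def coFibWord (n : ℕ) : List ℕ := fibWord (n - 2) ++ fibWord (n - 1)

lemma fibWord_append_coFibWord (n : ℕ) :
    fibWord (n + 2) ++ coFibWord (n + 3) = fibWord (n + 4) := by
  change fibWord (n + 2) ++ (fibWord (n + 1) ++ fibWord (n + 2))
    = fibWord (n + 2) ++ fibWord (n + 1) ++ fibWord (n + 2)
  rw [List.append_assoc]

lemma isFibPrefix_fibWord {m : ℕ} (hm : 2 ≤ m) : IsFibPrefix (fibWord m) :=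
  ⟨m, hm, List.prefix_refl _⟩

lemma zero_append_flatten_coFibWord (N : ℕ) :
    [0] ++ ((List.range N).map (fun i => coFibWord (2 * (i + 1) + 1))).flatten
      = fibWord (2 * N + 2) := by
  induction N with
  | zero => rfl
  | succ n ih =>
    rw [List.range_succ, List.map_append, List.flatten_append, ← List.append_assoc, ih,
      List.map_singleton, List.flatten_singleton]
    exact fibWord_append_coFibWord (2 * n)

theorem stmt5_general (N : ℕ) :
    IsFibPrefix ([0] ++
      ((List.range N).map (fun i => coFibWord (2 * (i + 1) + 1))).flatten) := by
  rw [zero_append_flatten_coFibWord]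
  exact isFibPrefix_fibWord (by omega)

theorem stmt5 (N : ℕ) (hN : 1 ≤ N) :
    IsFibPrefix ([0] ++
      ((List.range N).map (fun i => coFibWord (2 * (i + 1) + 1))).flatten) :=
  stmt5_general N
end

section
/- For every N ≥ 1, the concatenation f̂_1·f̂_2⋯f̂_N of the first N singular words is a prefix of the Fibonacci infinite word f. In other words, f = ∏_{n≥1} f̂_n (Wen–Wen factorization). -/
/-- The left rotation of a word w₁⋯w_k is w_k w₁⋯w_{k-1}. -/
def leftRot (w : List ℕ) : List ℕ :=
  match w.getLast? with
  | none => []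
  | some a => a :: w.dropLast

/-- The singular word f̂ n: the left rotation of f n with its first letter
complemented (0 and 1 exchanged). -/
def singWord (n : ℕ) : List ℕ :=
  match leftRot (fibWord n) with
  | [] => []
  | a :: t => (1 - a) :: t


lemma fib_last : ∀ n : ℕ, (fibWord (n+1)).getLast? = some ((n+1) % 2) := by
  intro n
  induction n using Nat.strong_induction_on with
  | _ n ih =>
    match n with
    | 0 => rfl
    | 1 => rfl
    | n+2 =>
      have h := ih n (by omega)
      have hne : fibWord (n+1) ≠ [] := by
        intro h0; rw [h0] at h; simp at h
      show (fibWord (n+2) ++ fibWord (n+1)).getLast? = _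
      rw [List.getLast?_append_of_ne_nil _ hne, h]
      congr 1
      omega

lemma fib_ne_nil (n : ℕ) : fibWord (n+1) ≠ [] := by
  intro h0
  have := fib_last n
  rw [h0] at this; simp at this

lemma fib_eq (n : ℕ) : fibWord (n+1) = (fibWord (n+1)).dropLast ++ [(n+1) % 2] := by
  have h := fib_last n
  have hne := fib_ne_nil n
  rw [List.getLast?_eq_getLast hne] at h
  conv_lhs => rw [← List.dropLast_append_getLast hne]
  simp at h
  rw [h]

lemma sing_eq (n : ℕ) : singWord (n+1) = (1 - (n+1) % 2) :: (fibWord (n+1)).dropLast := by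
  unfold singWord leftRot
  rw [fib_last n]

lemma key : ∀ N : ℕ, 1 ≤ N →
    ((List.range N).map (fun i => singWord (i + 1))).flatten = (fibWord (N+2)).dropLast := by
  intro N hN
  induction N, hN using Nat.le_induction with
  | base => rfl
  | succ N hN ih =>
    rw [List.range_succ, List.map_append, List.flatten_append, ih]
    simp only [List.map_cons, List.map_nil, List.flatten, List.append_nil]
    rw [sing_eq N]
    show _ = (fibWord (N+2) ++ fibWord (N+1)).dropLast
    rw [List.dropLast_append_of_ne_nil (fib_ne_nil N)]
    have h2 : (1 - (N+1) % 2) = (N+2) % 2 := by omega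
    rw [h2]
    conv_rhs => rw [fib_eq (N+1)]
    simp
    omega

theorem stmt7 (N : ℕ) (hN : 1 ≤ N) :
    IsFibPrefix (((List.range N).map (fun i => singWord (i + 1))).flatten) := by
  rw [key N hN]
  exact ⟨N+2, by omega, List.dropLast_prefix _⟩
end

section
/- For every n ≥ 1 one has c_{2n+1} = f̂_{2n-1}·f̂_{2n} and c_{2n+2} = f̂_{2n+1}·f̂_{2n}, and consequently rev(c_{2n+1}) = f̂_{2n}·f̂_{2n-1} and rev(c_{2n+2}) = f̂_{2n}·f̂_{2n+1}. -/
/-- The lower Christoffel word c n = 0 · p n · 1, for n ≥ 3. -/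
def chrisWord (n : ℕ) : List ℕ := [0] ++ centralWord n ++ [1]

/-!
For `n ≥ 3` the central words satisfy `p (n+2) = f (n+1) · p n = f n · p (n+1)` and
`f n = p n · ab`, where `ab` is `01` for odd `n` and `10` for even `n`; hence `f̂ n = a · p n · a`.
Substituting `f (2n-1) = p (2n-1) · 01` into `c (2n+1) = 0 · f (2n-1) · p (2n) · 1` splits it as
`(0 · p (2n-1) · 0) · (1 · p (2n) · 1)`; the case `c (2n+2)` is the same with the other
factorization. Comparing the two factorizations of `p (n+2)` shows that central words, hence
singular words, are palindromes, which gives the reversed identities.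
-/

theorem List.dropLast_dropLast_append {α : Type*} (l₁ : List α) {l₂ : List α}
    (h : 2 ≤ l₂.length) : (l₁ ++ l₂).dropLast.dropLast = l₁ ++ l₂.dropLast.dropLast := by
  have h₂ : l₂ ≠ [] := List.ne_nil_of_length_pos (by omega)
  have h₂' : l₂.dropLast ≠ [] := List.ne_nil_of_length_pos (by rw [List.length_dropLast]; omega)
  rw [List.dropLast_append_of_ne_nil h₂, List.dropLast_append_of_ne_nil h₂']

theorem leftRot_concat (w : List ℕ) (a : ℕ) : leftRot (w ++ [a]) = a :: w := by
  rw [leftRot, List.getLast?_concat, List.dropLast_concat]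

theorem length_fibWord : ∀ n, (fibWord n).length = Nat.fib n
  | 0 | 1 | 2 => rfl
  | n + 3 => by
    rw [fibWord, List.length_append, length_fibWord (n + 2), length_fibWord (n + 1),
      Nat.fib_add_two (n := n + 1), add_comm]

theorem centralWord_add_five (n : ℕ) :
    centralWord (n + 5) = fibWord (n + 4) ++ centralWord (n + 3) := by
  have h : 2 ≤ (fibWord (n + 3)).length :=
    length_fibWord (n + 3) ▸ Nat.fib_mono (by omega : 3 ≤ n + 3)
  exact List.dropLast_dropLast_append _ h

theorem centralWord_add_four : ∀ n,
    centralWord (n + 4) = fibWord (n + 2) ++ centralWord (n + 3)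
  | 0 => rfl
  | n + 1 => by
    rw [centralWord_add_five, centralWord_add_four n, fibWord, List.append_assoc]

theorem fibWord_add_five_of_eq_append {n : ℕ} {t : List ℕ}
    (h : fibWord (n + 3) = centralWord (n + 3) ++ t) :
    fibWord (n + 5) = centralWord (n + 5) ++ t := by
  rw [fibWord, h, centralWord_add_five, List.append_assoc]

theorem fibWord_two_mul_add_three : ∀ m,
    fibWord (2 * m + 3) = centralWord (2 * m + 3) ++ [0, 1]
  | 0 => rfl
  | m + 1 => fibWord_add_five_of_eq_append (fibWord_two_mul_add_three m)

theorem fibWord_two_mul_add_four : ∀ m,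
    fibWord (2 * m + 4) = centralWord (2 * m + 4) ++ [1, 0]
  | 0 => rfl
  | m + 1 => fibWord_add_five_of_eq_append (fibWord_two_mul_add_four m)

theorem centralWord_reverse : ∀ n, (centralWord n).reverse = centralWord n
  | 0 | 1 | 2 | 3 | 4 => rfl
  | n + 5 => by
    obtain ⟨a, b, h₃, h₄⟩ : ∃ a b, fibWord (n + 3) = centralWord (n + 3) ++ [a, b] ∧
        fibWord (n + 4) = centralWord (n + 4) ++ [b, a] := by
      obtain ⟨m, rfl | rfl⟩ := Nat.even_or_odd' n
      · exact ⟨0, 1, fibWord_two_mul_add_three m, fibWord_two_mul_add_four m⟩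
      · exact ⟨1, 0, fibWord_two_mul_add_four m, fibWord_two_mul_add_three (m + 1)⟩
    calc (centralWord (n + 5)).reverse
        = (fibWord (n + 4) ++ centralWord (n + 3)).reverse := by rw [centralWord_add_five]
      _ = fibWord (n + 3) ++ centralWord (n + 4) := by
        simp [h₃, h₄, centralWord_reverse (n + 3), centralWord_reverse (n + 4)]
      _ = centralWord (n + 5) := (centralWord_add_four (n + 1)).symm

theorem singWord_eq_of_fibWord_eq {n : ℕ} {w : List ℕ} {a b : ℕ}
    (h : fibWord n = w ++ [a, b]) : singWord n = (1 - b) :: (w ++ [a]) := by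
  rw [singWord, h, show w ++ [a, b] = w ++ [a] ++ [b] by simp, leftRot_concat]

theorem singWord_two_mul_add_three (m : ℕ) :
    singWord (2 * m + 3) = 0 :: (centralWord (2 * m + 3) ++ [0]) :=
  singWord_eq_of_fibWord_eq (fibWord_two_mul_add_three m)

theorem singWord_two_mul_add_four (m : ℕ) :
    singWord (2 * m + 4) = 1 :: (centralWord (2 * m + 4) ++ [1]) :=
  singWord_eq_of_fibWord_eq (fibWord_two_mul_add_four m)

theorem singWord_reverse : ∀ n, (singWord n).reverse = singWord n
  | 0 | 1 | 2 => rfl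
  | n + 3 => by
    obtain ⟨m, rfl | rfl⟩ := Nat.even_or_odd' n
    · simp [singWord_two_mul_add_three, centralWord_reverse]
    · simp [singWord_two_mul_add_four, centralWord_reverse]

theorem chrisWord_two_mul_add_five (m : ℕ) :
    chrisWord (2 * m + 5) = singWord (2 * m + 3) ++ singWord (2 * m + 4) := by
  rw [chrisWord, centralWord_add_four (2 * m + 1), fibWord_two_mul_add_three,
    singWord_two_mul_add_three, singWord_two_mul_add_four]
  simp

theorem chrisWord_two_mul_add_six (m : ℕ) :
    chrisWord (2 * m + 6) = singWord (2 * m + 5) ++ singWord (2 * m + 4) := by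
  have hf := fibWord_two_mul_add_three (m + 1)
  have hs := singWord_two_mul_add_three (m + 1)
  rw [mul_add_one] at hf hs
  rw [chrisWord, centralWord_add_five (2 * m + 1), hf, hs, singWord_two_mul_add_four]
  simp

theorem stmt11 (n : ℕ) (hn : 1 ≤ n) :
    chrisWord (2 * n + 1) = singWord (2 * n - 1) ++ singWord (2 * n) ∧
    chrisWord (2 * n + 2) = singWord (2 * n + 1) ++ singWord (2 * n) ∧
    (chrisWord (2 * n + 1)).reverse = singWord (2 * n) ++ singWord (2 * n - 1) ∧
    (chrisWord (2 * n + 2)).reverse = singWord (2 * n) ++ singWord (2 * n + 1) := by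
  obtain ⟨k, rfl⟩ := Nat.exists_eq_add_of_le' hn
  have hodd :
      chrisWord (2 * (k + 1) + 1) = singWord (2 * (k + 1) - 1) ++ singWord (2 * (k + 1)) := by
    cases k with
    | zero => rfl
    | succ m => exact chrisWord_two_mul_add_five m
  have heven :
      chrisWord (2 * (k + 1) + 2) = singWord (2 * (k + 1) + 1) ++ singWord (2 * (k + 1)) := by
    cases k with
    | zero => rfl
    | succ m => exact chrisWord_two_mul_add_six m
  refine ⟨hodd, heven, ?_, ?_⟩ <;> simp only [hodd, heven, List.reverse_append, singWord_reverse]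
end

section
/- For every N ≥ 1, the concatenation c_3·c_5⋯c_{2N+1} of the first N odd-indexed lower Christoffel words is a prefix of the Fibonacci infinite word f. In other words, f = ∏_{n≥1} c_{2n+1} (Melançon's factorization). -/
theorem fibWord_succ_ne_nil : ∀ n, fibWord (n + 1) ≠ []
  | 0 => by simp [fibWord]
  | 1 => by simp [fibWord]
  | n + 2 => by
    rw [fibWord_add_three]
    exact List.append_ne_nil_of_left_ne_nil (fibWord_succ_ne_nil (n + 1)) _

theorem fibWord_append_centralWord_comm (n : ℕ) :
    fibWord (n + 4) ++ centralWord (n + 3) = fibWord (n + 3) ++ centralWord (n + 4) := by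
  induction n with
  | zero => decide
  | succ n ih =>
    rw [fibWord_add_three, List.append_assoc, ← ih, ← centralWord_add_five]

theorem fibWord_even_eq_centralWord_append (K : ℕ) : fibWord (2 * K + 4) = centralWord (2 * K + 4) ++ [1, 0] := by
  obtain ⟨u, hu⟩ : ∃ u, fibWord (2 * K + 4) = u ++ [1, 0] := by
    induction K with
    | zero => exact ⟨[0], rfl⟩
    | succ K ih =>
      obtain ⟨u, hu⟩ := ih
      refine ⟨fibWord (2 * K + 5) ++ u, ?_⟩
      rw [show 2 * (K + 1) + 4 = (2 * K + 3) + 3 by ring, fibWord_add_three, hu]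
      simp
  have hdrop : (u ++ [1, 0]).dropLast.dropLast = u := by
    rw [show u ++ [1, 0] = u ++ [1] ++ [0] by simp, List.dropLast_concat, List.dropLast_concat]
  rw [centralWord, hu, hdrop]

theorem flatten_map_chrisWord_odd_eq (M : ℕ) :
    ((List.range (M + 1)).map (fun i => chrisWord (2 * (i + 1) + 1))).flatten
      = centralWord (2 * M + 4) ++ [1] := by
  induction M with
  | zero => decide
  | succ K ih =>
    rw [List.range_succ, List.map_append, List.flatten_append, ih]
    simp only [List.map_cons, List.map_nil, List.flatten_cons, List.flatten_nil, List.append_nil,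
      chrisWord, show 2 * (K + 1 + 1) + 1 = 2 * K + 5 by ring,
      show 2 * (K + 1) + 4 = 2 * K + 6 by ring]
    calc centralWord (2 * K + 4) ++ [1] ++ ([0] ++ centralWord (2 * K + 5) ++ [1])
        = fibWord (2 * K + 4) ++ centralWord (2 * K + 5) ++ [1] := by
          rw [fibWord_even_eq_centralWord_append]; simp
      _ = fibWord (2 * K + 5) ++ centralWord (2 * K + 4) ++ [1] := by
          rw [fibWord_append_centralWord_comm (2 * K + 1)]
      _ = centralWord (2 * K + 6) ++ [1] := by
          rw [centralWord_add_five (2 * K + 1)]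

theorem stmt12_general (N : ℕ) :
    IsFibPrefix (((List.range N).map (fun i => chrisWord (2 * (i + 1) + 1))).flatten) := by
  rcases N with _ | M
  · exact ⟨2, le_rfl, List.nil_prefix⟩
  refine ⟨2 * M + 4, by omega, ?_⟩
  rw [flatten_map_chrisWord_odd_eq, fibWord_even_eq_centralWord_append]
  exact ⟨[0], by simp⟩

theorem stmt12 (N : ℕ) (hN : 1 ≤ N) :
    IsFibPrefix (((List.range N).map (fun i => chrisWord (2 * (i + 1) + 1))).flatten) :=
  stmt12_general N
end

section
/- For every N ≥ 1, the word 010·∏_{n=1}^{N}(c_{2n+1}·c_{2n+1}·c_{2n+2}) is a prefix of the Fibonacci infinite word f. In other words, f = 010·∏_{n≥1} c_{2n+1}² c_{2n+2}. -/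
theorem exists_fibWord_eq_append (n : ℕ) :
    ∃ p, fibWord (n + 3) = p ++ [n % 2, (n + 1) % 2] ∧
      fibWord (n + 1) ++ fibWord (n + 2) = p ++ [(n + 1) % 2, n % 2] := by
  induction n with
  | zero => exact ⟨[], rfl, rfl⟩
  | succ n ih =>
    obtain ⟨p, h3, h12⟩ := ih
    have hmod : (n + 1 + 1) % 2 = n % 2 := by omega
    refine ⟨fibWord (n + 2) ++ p, ?_, ?_⟩
    · rw [fibWord_add_three, fibWord_add_three, List.append_assoc, h12, hmod, List.append_assoc]
    · rw [h3, hmod, List.append_assoc]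

theorem dropLast_dropLast_append_pair {α : Type*} (p : List α) (a b : α) :
    (p ++ [a, b]).dropLast.dropLast = p := by
  rw [← List.singleton_append, ← List.append_assoc, List.dropLast_concat, List.dropLast_concat]

theorem fibWord_eq_centralWord_append (n : ℕ) :
    fibWord (n + 3) = centralWord (n + 3) ++ [n % 2, (n + 1) % 2] ∧
      fibWord (n + 1) ++ fibWord (n + 2) = centralWord (n + 3) ++ [(n + 1) % 2, n % 2] := by
  obtain ⟨p, h3, h12⟩ := exists_fibWord_eq_append n
  rw [centralWord, h3, dropLast_dropLast_append_pair]
  exact ⟨rfl, h12⟩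

theorem fibWord_add_five_append (n : ℕ) :
    fibWord (n + 5) ++ (fibWord (n + 2) ++ fibWord (n + 1) ++ fibWord (n + 2) ++
      fibWord (n + 4) ++ fibWord (n + 3)) = fibWord (n + 7) := by
  rw [fibWord_add_three (n + 4), fibWord_add_three (n + 3), fibWord_add_three (n + 2),
    fibWord_add_three (n + 1), fibWord_add_three n]
  simp only [List.append_assoc]

def christoffelBlock (n : ℕ) : List ℕ := chrisWord n ++ chrisWord n ++ chrisWord (n + 1)

theorem christoffelBlock_append_fibWord (k : ℕ) :
    christoffelBlock (2 * k + 3) ++ 0 :: fibWord (2 * k + 3) =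
      0 :: (fibWord (2 * k + 1) ++ fibWord (2 * k + 2) ++ fibWord (2 * k + 1) ++
        fibWord (2 * k + 2) ++ fibWord (2 * k + 4) ++ fibWord (2 * k + 3)) := by
  have hodd : centralWord (2 * k + 3) ++ [1, 0] = fibWord (2 * k + 1) ++ fibWord (2 * k + 2) := by
    have := (fibWord_eq_centralWord_append (2 * k)).2
    rwa [show (2 * k + 1) % 2 = 1 by omega, show 2 * k % 2 = 0 by omega, eq_comm] at this
  have heven : centralWord (2 * k + 4) ++ [1, 0] = fibWord (2 * k + 4) := by
    have := (fibWord_eq_centralWord_append (2 * k + 1)).1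
    rwa [show (2 * k + 1) % 2 = 1 by omega, show (2 * k + 1 + 1) % 2 = 0 by omega, eq_comm] at this
  simp only [christoffelBlock, chrisWord, ← hodd, ← heven, List.append_assoc, List.cons_append,
    List.nil_append]

def christoffelPrefix (N : ℕ) : List ℕ :=
  [0, 1, 0] ++ ((List.range N).map fun i => christoffelBlock (2 * (i + 1) + 1)).flatten

theorem christoffelPrefix_append_fibWord (N : ℕ) :
    christoffelPrefix N ++ 0 :: fibWord (2 * N + 1) = fibWord (2 * N + 5) := by
  induction N with
  | zero => rfl
  | succ N ih =>
    have hW : christoffelPrefix (N + 1) = christoffelPrefix N ++ christoffelBlock (2 * N + 3) := by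
      simp only [christoffelPrefix, List.range_succ, List.map_append, List.flatten_append,
        List.map_cons, List.map_nil, List.flatten_cons, List.flatten_nil, List.append_nil,
        List.append_assoc]
      rfl
    calc christoffelPrefix (N + 1) ++ 0 :: fibWord (2 * N + 3)
        = (christoffelPrefix N ++ 0 :: fibWord (2 * N + 1)) ++
            (fibWord (2 * N + 2) ++ fibWord (2 * N + 1) ++ fibWord (2 * N + 2) ++
              fibWord (2 * N + 4) ++ fibWord (2 * N + 3)) := by
          rw [hW, List.append_assoc, christoffelBlock_append_fibWord]
          simp only [List.append_assoc, List.cons_append]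
      _ = fibWord (2 * N + 7) := by rw [ih, fibWord_add_five_append]

theorem stmt14_general (N : ℕ) :
    IsFibPrefix ([0, 1, 0] ++
      ((List.range N).map
        (fun i => chrisWord (2 * (i + 1) + 1) ++ chrisWord (2 * (i + 1) + 1) ++
          chrisWord (2 * (i + 1) + 2))).flatten) :=
  ⟨2 * N + 5, by omega, _, christoffelPrefix_append_fibWord N⟩

theorem stmt14 (N : ℕ) (hN : 1 ≤ N) :
    IsFibPrefix ([0, 1, 0] ++
      ((List.range N).map
        (fun i => chrisWord (2 * (i + 1) + 1) ++ chrisWord (2 * (i + 1) + 1) ++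
          chrisWord (2 * (i + 1) + 2))).flatten) :=
  stmt14_general N
end
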